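/- arXiv:1706.02976 — 8 statements merged into one kernel-verified Lean document; each statement's English description precedes it below -/
import Mathlib

section
/- Let T > 0 and let a, b : [0,T] → ℝ be continuously differentiable functions with a(t) < b(t) for all t ∈ [0,T]. Set M = sup_{t ∈ [0,T]} (b(t) − a(t)) and L = 2·max{ sup_{t ∈ [0,T]} b'(t), sup_{t ∈ [0,T]} (−a'(t)), 0 }. Then there exists a function h : [0,T] → ℝ such that (i) a(t) − 2M ≤ h(t) ≤ b(t) + 2M for all t ∈ [0,T], and (ii) |h(t₁) − h(t₂)| ≤ L·|t₁ − t₂| for all t₁, t₂ ∈ [0,T]. -/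
/-!
The bounds `b' ≤ L` and `-a' ≤ L` make `b` and `a` one-sided `L`-Lipschitz by the mean value
theorem: `b y - b x ≤ L (y - x)` and `a x - a y ≤ L (y - x)` for `x ≤ y`. The inf-convolution
`h t = inf_y (b y + L |t - y|)` is `L`-Lipschitz and lies below `b`; it lies above `a` because each
`b y + L |t - y|` dominates `a t`, through `b t` if `y ≤ t` and through `a y` if `t ≤ y`.
So even `a ≤ h ≤ b` holds, and `M ≥ b t - a t > 0` gives the stated bounds.
-/

open Set NNReal

theorem Convex.image_sub_le_mul_sub_of_hasDerivWithinAt_le {D : Set ℝ} (hD : Convex ℝ D)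
    {f f' : ℝ → ℝ} (hf : ∀ t ∈ D, HasDerivWithinAt f (f' t) D t) {C : ℝ}
    (hf'C : ∀ t ∈ D, f' t ≤ C) {x y : ℝ} (hx : x ∈ D) (hy : y ∈ D) (hxy : x ≤ y) :
    f y - f x ≤ C * (y - x) := by
  have hderiv : ∀ t ∈ interior D, HasDerivAt f (f' t) t := fun t ht =>
    (hf t (interior_subset ht)).hasDerivAt (mem_interior_iff_mem_nhds.mp ht)
  refine hD.image_sub_le_mul_sub_of_deriv_le (fun t ht => (hf t ht).continuousWithinAt)
    (fun t ht => (hderiv t ht).differentiableAt.differentiableWithinAt)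
    (fun t ht => ?_) x hx y hy hxy
  rw [(hderiv t ht).deriv]
  exact hf'C t (interior_subset ht)

theorem exists_lipschitzOnWith_between {s : Set ℝ} {a b : ℝ → ℝ} {K : ℝ≥0}
    (hab : ∀ t ∈ s, a t ≤ b t)
    (ha : ∀ x ∈ s, ∀ y ∈ s, x ≤ y → a x - a y ≤ K * (y - x))
    (hb : ∀ x ∈ s, ∀ y ∈ s, x ≤ y → b y - b x ≤ K * (y - x)) :
    ∃ h : ℝ → ℝ, (∀ t ∈ s, a t ≤ h t ∧ h t ≤ b t) ∧ LipschitzOnWith K h s := by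
  have hlow : ∀ t ∈ s, ∀ y : s, a t ≤ b y + K * dist t y := by
    rintro t ht ⟨y, hy⟩
    rw [Real.dist_eq]
    rcases le_total y t with hyt | hty
    · rw [abs_of_nonneg (sub_nonneg.mpr hyt)]
      linarith [hb y hy t ht hyt, hab t ht]
    · rw [abs_of_nonpos (sub_nonpos.mpr hty)]
      linarith [ha t ht y hy hty, hab y hy]
  have hbdd : ∀ t ∈ s, BddBelow (range fun y : s => b y + K * dist t y) := fun t ht =>
    ⟨a t, forall_mem_range.mpr (hlow t ht)⟩
  refine ⟨fun t => ⨅ y : s, b y + K * dist t y, fun t ht => ⟨?_, ?_⟩, ?_⟩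
  · have : Nonempty s := ⟨⟨t, ht⟩⟩
    exact le_ciInf (hlow t ht)
  · simpa using ciInf_le (hbdd t ht) ⟨t, ht⟩
  · refine LipschitzOnWith.of_le_add_mul K fun x hx y hy => ?_
    have : Nonempty s := ⟨⟨y, hy⟩⟩
    rw [← sub_le_iff_le_add]
    refine le_ciInf fun z => ?_
    have hxz := ciInf_le (hbdd x hx) z
    have := mul_le_mul_of_nonneg_left (dist_triangle x y z) K.coe_nonneg
    linarith

theorem le_csSup_image_of_continuousOn {f : ℝ → ℝ} {D : Set ℝ} (hD : IsCompact D)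
    (hf : ContinuousOn f D) {t : ℝ} (ht : t ∈ D) : f t ≤ sSup (f '' D) :=
  le_csSup (hD.bddAbove_image hf) (mem_image_of_mem f ht)

theorem stmt_0_general (T : ℝ) (a b a' b' : ℝ → ℝ)
    (ha : ∀ t ∈ Icc (0 : ℝ) T, HasDerivWithinAt a (a' t) (Icc 0 T) t)
    (hb : ∀ t ∈ Icc (0 : ℝ) T, HasDerivWithinAt b (b' t) (Icc 0 T) t)
    (ha' : ContinuousOn a' (Icc 0 T)) (hb' : ContinuousOn b' (Icc 0 T))
    (hab : ∀ t ∈ Icc (0 : ℝ) T, a t < b t)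
    (M L : ℝ)
    (hM : M = sSup ((fun t => b t - a t) '' Icc 0 T))
    (hL : L = 2 * max (max (sSup (b' '' Icc 0 T)) (sSup ((fun t => -a' t) '' Icc 0 T))) 0) :
    ∃ h : ℝ → ℝ, (∀ t ∈ Icc (0 : ℝ) T, a t - 2 * M ≤ h t ∧ h t ≤ b t + 2 * M) ∧
      ∀ t₁ ∈ Icc (0 : ℝ) T, ∀ t₂ ∈ Icc (0 : ℝ) T, |h t₁ - h t₂| ≤ L * |t₁ - t₂| := by
  set m := max (max (sSup (b' '' Icc 0 T)) (sSup ((fun t => -a' t) '' Icc 0 T))) 0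
  have hm0 : 0 ≤ m := le_max_right _ _
  have hmL : m ≤ L := by linarith
  have hL0 : 0 ≤ L := by linarith
  have hb'L (t) (ht : t ∈ Icc 0 T) : b' t ≤ L :=
    (le_csSup_image_of_continuousOn isCompact_Icc hb' ht).trans <|
      (le_max_left _ _).trans <| (le_max_left _ _).trans hmL
  have ha'L (t) (ht : t ∈ Icc 0 T) : -a' t ≤ L :=
    (le_csSup_image_of_continuousOn isCompact_Icc ha'.neg ht).trans <|
      (le_max_right _ _).trans <| (le_max_left _ _).trans hmL
  lift L to ℝ≥0 using hL0
  obtain ⟨h, hbetween, hlip⟩ := exists_lipschitzOnWith_between (K := L)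
    (fun t ht => (hab t ht).le)
    (fun x hx y hy hxy => by
      simpa [add_comm] using (convex_Icc 0 T).image_sub_le_mul_sub_of_hasDerivWithinAt_le
        (fun t ht => (ha t ht).neg) ha'L hx hy hxy)
    (fun x hx y hy hxy => (convex_Icc 0 T).image_sub_le_mul_sub_of_hasDerivWithinAt_le hb hb'L
      hx hy hxy)
  have hgap (t) (ht : t ∈ Icc 0 T) : b t - a t ≤ M := hM ▸ le_csSup_image_of_continuousOn
    isCompact_Icc (fun s hs => ((hb s hs).sub (ha s hs)).continuousWithinAt) ht
  refine ⟨h, fun t ht => ?_, fun t₁ ht₁ t₂ ht₂ => ?_⟩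
  · have := hab t ht
    constructor <;> linarith [hbetween t ht, hgap t ht]
  · simpa [Real.dist_eq] using hlip.dist_le_mul t₁ ht₁ t₂ ht₂

/-- Lemma 2.3 of Chou–Wang / Lemma `lemma_2_3` in the paper.
Given `T > 0` and continuously differentiable `a, b : [0,T] → ℝ` with `a < b`,
with `M = sup (b - a)` and `L = 2 max{sup b', sup (-a'), 0}`, there exists
`h : [0,T] → ℝ` with `a - 2M ≤ h ≤ b + 2M` which is `L`-Lipschitz. -/
theorem stmt_0 (T : ℝ) (hT : 0 < T) (a b a' b' : ℝ → ℝ)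
    (ha : ∀ t ∈ Icc (0 : ℝ) T, HasDerivWithinAt a (a' t) (Icc 0 T) t)
    (hb : ∀ t ∈ Icc (0 : ℝ) T, HasDerivWithinAt b (b' t) (Icc 0 T) t)
    (ha' : ContinuousOn a' (Icc 0 T)) (hb' : ContinuousOn b' (Icc 0 T))
    (hab : ∀ t ∈ Icc (0 : ℝ) T, a t < b t)
    (M L : ℝ)
    (hM : M = sSup ((fun t => b t - a t) '' Icc 0 T))
    (hL : L = 2 * max (max (sSup (b' '' Icc 0 T)) (sSup ((fun t => -a' t) '' Icc 0 T))) 0) :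
    ∃ h : ℝ → ℝ, (∀ t ∈ Icc (0 : ℝ) T, a t - 2 * M ≤ h t ∧ h t ≤ b t + 2 * M) ∧
      ∀ t₁ ∈ Icc (0 : ℝ) T, ∀ t₂ ∈ Icc (0 : ℝ) T, |h t₁ - h t₂| ≤ L * |t₁ - t₂| :=
  stmt_0_general T a b a' b' ha hb ha' hb' hab M L hM hL
end

section
/- For each s > 0 let C_s ⊆ ℝ^{n+1} (n ≥ 1) be a nonempty bounded open convex set with topological frontier M_s = ∂C_s. Assume: (i) s₁ < s₂ implies closure(C_{s₁}) ⊆ C_{s₂}; (ii) 0 ∉ M_s for every s > 0; (iii) every point p ∈ ℝ^{n+1} \ {0} lies in M_s for some s > 0. Then 0 ∈ C_s for every s > 0. -/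
open Set

/-- Remark `ordering` in the paper. For a nested family of nonempty
bounded open convex sets `C s ⊆ ℝ^{n+1}` whose frontiers foliate `ℝ^{n+1} \ {0}`
and avoid the origin, every `C s` contains the origin. -/
theorem stmt_1 (n : ℕ) (hn : 1 ≤ n)
    (C : ℝ → Set (EuclideanSpace ℝ (Fin (n + 1))))
    (hne : ∀ s, 0 < s → (C s).Nonempty)
    (hbd : ∀ s, 0 < s → Bornology.IsBounded (C s))
    (hop : ∀ s, 0 < s → IsOpen (C s))
    (hcv : ∀ s, 0 < s → Convex ℝ (C s))
    (hnest : ∀ s₁ s₂ : ℝ, 0 < s₁ → s₁ < s₂ → closure (C s₁) ⊆ C s₂)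
    (h0 : ∀ s, 0 < s → (0 : EuclideanSpace ℝ (Fin (n + 1))) ∉ frontier (C s))
    (hcover : ∀ p : EuclideanSpace ℝ (Fin (n + 1)), p ≠ 0 →
      ∃ s, 0 < s ∧ p ∈ frontier (C s)) :
    ∀ s, 0 < s → (0 : EuclideanSpace ℝ (Fin (n + 1))) ∈ C s := by
  by_contra h
  push_neg at h
  obtain ⟨s₀, hs₀, h0s₀⟩ := h
  have hcl : (0 : EuclideanSpace ℝ (Fin (n+1))) ∉ closure (C s₀) := by
    intro hc
    exact h0 s₀ hs₀ ⟨hc, by simpa [(hop s₀ hs₀).interior_eq] using h0s₀⟩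
  set Z : ℕ → Set (EuclideanSpace ℝ (Fin (n+1))) :=
    fun k => closure (C (s₀ / (k + 1))) with hZdef
  have hpos : ∀ k : ℕ, 0 < s₀ / ((k : ℝ) + 1) := fun k => div_pos hs₀ (by positivity)
  have hmono : ∀ k, Z (k + 1) ⊆ Z k := by
    intro k
    have hlt : s₀ / ((k : ℝ) + 1 + 1) < s₀ / ((k : ℝ) + 1) :=
      div_lt_div_of_pos_left hs₀ (by positivity) (by linarith)
    have := (hnest _ _ (by positivity) hlt).trans subset_closure
    simpa [hZdef, Nat.cast_add, Nat.cast_one] using this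
  have hZne : ∀ k, (Z k).Nonempty := fun k =>
    ((hne _ (hpos k)).mono subset_closure)
  have hZcl : ∀ k, IsClosed (Z k) := fun k => isClosed_closure
  have hZcomp : IsCompact (Z 0) :=
    ((hbd _ (hpos 0)).isCompact_closure)
  obtain ⟨p, hp⟩ := IsCompact.nonempty_iInter_of_sequence_nonempty_isCompact_isClosed
    Z hmono hZne hZcomp hZcl
  have hpall : ∀ k, p ∈ Z k := by simpa using hp
  have hp0 : p ≠ 0 := by
    intro hpz
    apply hcl
    have := hpall 0
    simpa [hZdef, hpz] using this
  obtain ⟨t, ht, hpt⟩ := hcover p hp0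
  obtain ⟨k, hk⟩ := exists_nat_gt (s₀ / t)
  have hlt : s₀ / ((k : ℝ) + 1) < t := by
    rw [div_lt_iff₀ (by positivity)]
    have : s₀ < t * k := by
      rw [div_lt_iff₀ ht] at hk
      linarith [hk]
    nlinarith [ht]
  have hpm : p ∈ C t := hnest _ _ (hpos k) hlt (hpall k)
  exact hpt.2 (by simpa [(hop t ht).interior_eq] using hpm)
end

section
/- For each s > 0 let C_s ⊆ ℝ^{n+1} (n ≥ 1) be a nonempty bounded open convex set with topological frontier M_s = ∂C_s. Assume: (i) s₁ < s₂ implies closure(C_{s₁}) ⊆ C_{s₂}; (ii) 0 ∉ M_s for every s > 0; (iii) every point p ∈ ℝ^{n+1} \ {0} lies in M_s for some s > 0. Then for every r > 0 there exist s₁, s₂ > 0 such that M_{s₁} ⊆ B_r(0) (the open Euclidean ball of radius r about the origin) and B_r(0) ⊆ C_{s₂}. -/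
open Set

/-- Remark 10 in the paper. For a nested family of nonempty bounded
open convex sets `C s ⊆ ℝ^{n+1}` whose frontiers foliate `ℝ^{n+1} \ {0}` and avoid the
origin: for every `r > 0` there are `s₁, s₂ > 0` with `∂(C s₁) ⊆ B_r(0)` and
`B_r(0) ⊆ C s₂`. -/
theorem stmt_2 (n : ℕ) (hn : 1 ≤ n)
    (C : ℝ → Set (EuclideanSpace ℝ (Fin (n + 1))))
    (hne : ∀ s, 0 < s → (C s).Nonempty)
    (hbd : ∀ s, 0 < s → Bornology.IsBounded (C s))
    (hop : ∀ s, 0 < s → IsOpen (C s))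
    (hcv : ∀ s, 0 < s → Convex ℝ (C s))
    (hnest : ∀ s₁ s₂ : ℝ, 0 < s₁ → s₁ < s₂ → closure (C s₁) ⊆ C s₂)
    (h0 : ∀ s, 0 < s → (0 : EuclideanSpace ℝ (Fin (n + 1))) ∉ frontier (C s))
    (hcover : ∀ p : EuclideanSpace ℝ (Fin (n + 1)), p ≠ 0 →
      ∃ s, 0 < s ∧ p ∈ frontier (C s)) :
    ∀ r : ℝ, 0 < r → ∃ s₁, 0 < s₁ ∧ ∃ s₂, 0 < s₂ ∧
      frontier (C s₁) ⊆ Metric.ball (0 : EuclideanSpace ℝ (Fin (n + 1))) r ∧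
      Metric.ball (0 : EuclideanSpace ℝ (Fin (n + 1))) r ⊆ C s₂ := by
  intro r hr
  -- positivity of the small parameters
  have hpos : ∀ k : ℕ, (0 : ℝ) < 1 / (k + 1) := fun k => by positivity
  -- compactness of closures
  have hcomp : ∀ s, 0 < s → IsCompact (closure (C s)) := fun s hs =>
    Metric.isCompact_of_isClosed_isBounded isClosed_closure (hbd s hs).closure
  -- a frontier point is never in the (open) set
  have hfr' : ∀ s, 0 < s → ∀ x, x ∈ frontier (C s) → x ∉ C s := by
    intro s hs x hx hxC
    have : x ∈ interior (C s) := by rw [(hop s hs).interior_eq]; exact hxC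
    exact hx.2 this
  -- any point in all small closures must be 0
  have hKzero : ∀ x : EuclideanSpace ℝ (Fin (n + 1)),
      (∀ k : ℕ, x ∈ closure (C (1 / (k + 1)))) → x = 0 := by
    intro x hx
    by_contra hx0
    obtain ⟨s₀, hs₀, hxf⟩ := hcover x hx0
    obtain ⟨k, hk⟩ := exists_nat_one_div_lt hs₀
    exact hfr' s₀ hs₀ x hxf (hnest _ _ (hpos k) hk (hx k))
  -- the intersection of all small closures is nonempty
  have hKne : (⋂ k : ℕ, closure (C (1 / (k + 1)))).Nonempty := by
    apply IsCompact.nonempty_iInter_of_sequence_nonempty_isCompact_isClosed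
    · intro k
      exact subset_trans (hnest _ _ (hpos (k + 1)) (by
        apply one_div_lt_one_div_of_lt (by positivity); push_cast; linarith)) subset_closure
    · intro k; exact ((hne _ (hpos k)).mono subset_closure)
    · exact hcomp _ (hpos 0)
    · intro k; exact isClosed_closure
  -- hence 0 is in every small closure, so 0 ∈ C s for every s > 0
  have h0mem : ∀ s, 0 < s → (0 : EuclideanSpace ℝ (Fin (n + 1))) ∈ C s := by
    obtain ⟨x, hx⟩ := hKne
    have hx' : ∀ k : ℕ, x ∈ closure (C (1 / (k + 1))) := fun k => mem_iInter.1 hx k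
    have hx0 : x = 0 := hKzero x hx'
    intro s hs
    obtain ⟨k, hk⟩ := exists_nat_one_div_lt hs
    exact hnest _ _ (hpos k) hk (hx0 ▸ hx' k)
  -- Part 1: some small closure is inside the ball
  have part1 : ∃ s₁, 0 < s₁ ∧ closure (C s₁) ⊆ Metric.ball (0 : EuclideanSpace ℝ (Fin (n + 1))) r := by
    by_contra h
    push_neg at h
    have hD : ∀ k : ℕ, (closure (C (1 / (k + 1))) \ Metric.ball (0 : EuclideanSpace ℝ (Fin (n + 1))) r).Nonempty := by
      intro k
      obtain ⟨x, hxc, hxb⟩ := not_subset.1 (h _ (hpos k))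
      exact ⟨x, hxc, hxb⟩
    have hne' : (⋂ k : ℕ, closure (C (1 / (k + 1))) \ Metric.ball (0 : EuclideanSpace ℝ (Fin (n + 1))) r).Nonempty := by
      apply IsCompact.nonempty_iInter_of_sequence_nonempty_isCompact_isClosed
      · intro k
        refine diff_subset_diff_left ?_
        exact subset_trans (hnest _ _ (hpos (k + 1)) (by
          apply one_div_lt_one_div_of_lt (by positivity); push_cast; linarith)) subset_closure
      · exact hD
      · exact ((hcomp _ (hpos 0)).of_isClosed_subset
          (isClosed_closure.sdiff Metric.isOpen_ball) diff_subset)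
      · intro k; exact isClosed_closure.sdiff Metric.isOpen_ball
    obtain ⟨x, hx⟩ := hne'
    have hx' : ∀ k : ℕ, x ∈ closure (C (1 / (k + 1))) := fun k => (mem_iInter.1 hx k).1
    have hxb : x ∉ Metric.ball (0 : EuclideanSpace ℝ (Fin (n + 1))) r := (mem_iInter.1 hx 0).2
    have := hKzero x hx'
    exact hxb (this ▸ Metric.mem_ball_self hr)
  -- Part 2: the ball is inside some big C
  have part2 : ∃ s₂, 0 < s₂ ∧ Metric.ball (0 : EuclideanSpace ℝ (Fin (n + 1))) r ⊆ C s₂ := by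
    by_contra h
    push_neg at h
    have hkpos : ∀ k : ℕ, (0 : ℝ) < (k : ℝ) + 1 := fun k => by positivity
    have hE : ∀ k : ℕ, (Metric.closedBall (0 : EuclideanSpace ℝ (Fin (n + 1))) r \ C ((k : ℝ) + 1)).Nonempty := by
      intro k
      obtain ⟨x, hxb, hxC⟩ := not_subset.1 (h _ (hkpos k))
      exact ⟨x, Metric.ball_subset_closedBall hxb, hxC⟩
    have hne' : (⋂ k : ℕ, Metric.closedBall (0 : EuclideanSpace ℝ (Fin (n + 1))) r \ C ((k : ℝ) + 1)).Nonempty := by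
      apply IsCompact.nonempty_iInter_of_sequence_nonempty_isCompact_isClosed
      · intro k
        refine diff_subset_diff_right ?_
        exact subset_trans subset_closure (hnest _ _ (hkpos k) (by push_cast; linarith))
      · exact hE
      · exact ((isCompact_closedBall _ _).of_isClosed_subset
          (Metric.isClosed_closedBall.sdiff (hop _ (hkpos 0))) diff_subset)
      · intro k; exact Metric.isClosed_closedBall.sdiff (hop _ (hkpos k))
    obtain ⟨x, hx⟩ := hne'
    have hxC : ∀ k : ℕ, x ∉ C ((k : ℝ) + 1) := fun k => (mem_iInter.1 hx k).2
    by_cases hx0 : x = 0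
    · exact hxC 0 (hx0 ▸ h0mem _ (hkpos 0))
    · obtain ⟨s₀, hs₀, hxf⟩ := hcover x hx0
      obtain ⟨k, hk⟩ := exists_nat_gt s₀
      exact hxC k (hnest _ _ hs₀ (by push_cast; linarith) hxf.1)
  obtain ⟨s₁, hs₁, hsub₁⟩ := part1
  obtain ⟨s₂, hs₂, hsub₂⟩ := part2
  exact ⟨s₁, hs₁, s₂, hs₂, frontier_subset_closure.trans hsub₁, hsub₂⟩
end

section
/- Let K₁ ⊆ ℝ^{n+1} be a nonempty compact convex set with 0 in its interior. Then there exists a constant c > 0, depending only on K₁, with the following property: for every δ > 0 and every compact convex set K₂ with K₁ ⊆ K₂ and inf{ ‖y − z‖ : y ∈ ∂K₁, z ∈ ∂K₂ } ≥ δ, one has H_{K₂}(x) ≥ H_{K₁}(x) + c·δ for every unit vector x ∈ ℝ^{n+1}. -/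
open Set

/-- The support function `H_K(x) = sup_{y ∈ K} ⟨x, y⟩` of a set `K ⊆ ℝ^{n+1}`. -/
noncomputable def supportFn {n : ℕ} (K : Set (EuclideanSpace ℝ (Fin (n + 1))))
    (x : EuclideanSpace ℝ (Fin (n + 1))) : ℝ :=
  sSup ((fun y => (inner ℝ x y : ℝ)) '' K)

/-!
One can take `c = 1`. Let `y` maximise `⟨x, ·⟩` over `K₁`; then `y ∈ ∂K₁`, so the open ball
of radius `δ` about `y` misses `∂K₂`. Being connected and containing `y ∈ K₂`, that ball lies
in `K₂`, and so does its closure; in particular `y + δx ∈ K₂`, whence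
`H_{K₂}(x) ≥ ⟨x, y + δx⟩ = H_{K₁}(x) + δ`.
-/

open Metric RealInnerProductSpace

theorem IsPreconnected.subset_of_disjoint_frontier {X : Type*} [TopologicalSpace X]
    {s t : Set X} (hs : IsPreconnected s) (hst : (s ∩ t).Nonempty)
    (hd : Disjoint s (frontier t)) : s ⊆ t := by
  have hcover : s ⊆ interior t ∪ (closure t)ᶜ := fun x hx => by
    by_cases hxt : x ∈ closure t
    · exact Or.inl (by_contra fun hxi => hd.notMem_of_mem_left hx ⟨hxt, hxi⟩)
    · exact Or.inr hxt
  obtain ⟨x, hxs, hxt⟩ := hst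
  have hxi : x ∈ interior t :=
    by_contra fun hxi => hd.notMem_of_mem_left hxs ⟨subset_closure hxt, hxi⟩
  refine (hs.subset_left_of_subset_union isOpen_interior isClosed_closure.isOpen_compl ?_
    hcover ⟨x, hxs, hxi⟩).trans interior_subset
  exact disjoint_compl_right.mono_left interior_subset_closure

theorem closedBall_subset_of_forall_le_dist_frontier {E : Type*} [NormedAddCommGroup E]
    [NormedSpace ℝ E] {K : Set E} {a : E} {δ : ℝ} (hK : IsClosed K) (hδ : 0 < δ)
    (ha : a ∈ K) (h : ∀ z ∈ frontier K, δ ≤ dist a z) : closedBall a δ ⊆ K := by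
  have hball : ball a δ ⊆ K :=
    (convex_ball a δ).isPreconnected.subset_of_disjoint_frontier ⟨a, mem_ball_self hδ, ha⟩
      (disjoint_left.mpr fun z hz hzK => (h z hzK).not_gt (mem_ball'.mp hz))
  rw [← closure_ball a hδ.ne']
  exact closure_minimal hball hK

theorem mem_frontier_of_isMaxOn_inner {E : Type*} [NormedAddCommGroup E]
    [InnerProductSpace ℝ E] {K : Set E} {x y : E} (hx : x ≠ 0) (hy : y ∈ K)
    (hmax : IsMaxOn (fun z => ⟪x, z⟫) K y) : y ∈ frontier K := by
  refine ⟨subset_closure hy, fun hyi => hx ?_⟩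
  have hderiv : innerSL ℝ x = 0 :=
    (hmax.isLocalMax (mem_interior_iff_mem_nhds.mp hyi)).hasFDerivAt_eq_zero
      (innerSL ℝ x).hasFDerivAt
  rw [← norm_eq_zero, ← innerSL_apply_norm ℝ, hderiv, norm_zero]

section SupportFunction

variable {n : ℕ} {K : Set (EuclideanSpace ℝ (Fin (n + 1)))}
  {x y : EuclideanSpace ℝ (Fin (n + 1))}

theorem inner_le_supportFn (hK : IsCompact K) (hy : y ∈ K) : ⟪x, y⟫ ≤ supportFn K x :=
  le_csSup (hK.image (innerSL ℝ x).continuous).bddAbove (mem_image_of_mem _ hy)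

theorem supportFn_eq_of_isMaxOn (hy : y ∈ K) (hmax : IsMaxOn (fun z => ⟪x, z⟫) K y) :
    supportFn K x = ⟪x, y⟫ :=
  IsGreatest.csSup_eq ⟨mem_image_of_mem _ hy, forall_mem_image.mpr hmax⟩

end SupportFunction

theorem stmt_3_general (n : ℕ) (K₁ : Set (EuclideanSpace ℝ (Fin (n + 1))))
    (hK₁ne : K₁.Nonempty) (hK₁c : IsCompact K₁) :
    ∃ c : ℝ, 0 < c ∧ ∀ δ : ℝ, 0 < δ →
      ∀ K₂ : Set (EuclideanSpace ℝ (Fin (n + 1))), IsCompact K₂ → Convex ℝ K₂ →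
        K₁ ⊆ K₂ → (∀ y ∈ frontier K₁, ∀ z ∈ frontier K₂, δ ≤ ‖y - z‖) →
        ∀ x : EuclideanSpace ℝ (Fin (n + 1)), ‖x‖ = 1 →
          supportFn K₁ x + c * δ ≤ supportFn K₂ x := by
  refine ⟨1, one_pos, fun δ hδ K₂ hK₂c _ hsub hdist x hx => ?_⟩
  obtain ⟨y, hy, hmax⟩ := hK₁c.exists_isMaxOn hK₁ne (innerSL ℝ x).continuous.continuousOn
  have hx0 : x ≠ 0 := norm_ne_zero_iff.mp (by simp [hx])
  have hyfr : y ∈ frontier K₁ := mem_frontier_of_isMaxOn_inner hx0 hy hmax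
  have hball : closedBall y δ ⊆ K₂ :=
    closedBall_subset_of_forall_le_dist_frontier hK₂c.isClosed hδ (hsub hy) fun z hz =>
      (dist_eq_norm y z).symm ▸ hdist y hyfr z hz
  have hyx : y + δ • x ∈ closedBall y δ := by
    simp [norm_smul, hx, abs_of_pos hδ]
  calc supportFn K₁ x + 1 * δ = ⟪x, y + δ • x⟫ := by
        rw [supportFn_eq_of_isMaxOn hy hmax, inner_add_right, real_inner_smul_right,
          real_inner_self_eq_norm_sq, hx]
        ring
    _ ≤ supportFn K₂ x := inner_le_supportFn hK₂c (hball hyx)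

/-- Lemma 11 in the paper, quantitative monotonicity of support
functions. If `K₁` is compact convex with `0` in its interior, then there is `c > 0`
depending only on `K₁` such that whenever `K₂ ⊇ K₁` is compact convex with
`dist(∂K₁, ∂K₂) ≥ δ`, one has `H_{K₂}(x) ≥ H_{K₁}(x) + c δ` for all unit vectors `x`. -/
theorem stmt_3 (n : ℕ) (K₁ : Set (EuclideanSpace ℝ (Fin (n + 1))))
    (hK₁ne : K₁.Nonempty) (hK₁c : IsCompact K₁) (hK₁cv : Convex ℝ K₁)
    (hK₁0 : (0 : EuclideanSpace ℝ (Fin (n + 1))) ∈ interior K₁) :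
    ∃ c : ℝ, 0 < c ∧ ∀ δ : ℝ, 0 < δ →
      ∀ K₂ : Set (EuclideanSpace ℝ (Fin (n + 1))), IsCompact K₂ → Convex ℝ K₂ →
        K₁ ⊆ K₂ → (∀ y ∈ frontier K₁, ∀ z ∈ frontier K₂, δ ≤ ‖y - z‖) →
        ∀ x : EuclideanSpace ℝ (Fin (n + 1)), ‖x‖ = 1 →
          supportFn K₁ x + c * δ ≤ supportFn K₂ x :=
  stmt_3_general n K₁ hK₁ne hK₁c
end

section
/- Let a > 0 and b ∈ ℝ, and let ρ : [0,∞) → (0,∞) be differentiable with ρ'(t) = a·log ρ(t) + b for all t ≥ 0 and a·log ρ(0) + b > 0. Then ρ is strictly increasing, and there exists a constant c ≥ 1 such that for all t ≥ 1: c⁻¹·(1 + t)·log(1 + t) ≤ ρ(t) ≤ c·(1 + (1 + t)·(log(1 + t))²). -/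
/-!
Write `v = a log ρ + b` for the speed. Whenever `ρ` comes back to `ρ 0` its speed is
`v 0 > 0`, so `ρ ≥ ρ 0`; hence `v ≥ v 0 > 0` and `ρ` is strictly increasing.

Lower bound: `ρ t ≥ ρ 0 + v 0 · t ≥ m (1 + t)`, so `ρ' ≥ a log (1 + t) + a log m + b`, which
integrates to `ρ t ≥ a (1 + t) log (1 + t) - O(t)`; this is `≥ (a/2)(1 + t) log (1 + t)` for large
`t`, and monotonicity of `ρ` handles the remaining compact range.

Upper bound: `ρ t ≤ ρ 0 + v t · t` gives `R ≤ C t (1 + log R)` for `R = ρ t`. As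
`1 + log R ≤ 2 √R`, this forces `√R ≤ 2 C t`, so `log R = O(log t)` and `R = O(t log t)`.
-/

open Real Set Filter

lemma le_of_hasDerivWithinAt_Ici {f f' g g' : ℝ → ℝ} {s t : ℝ}
    (hf : ∀ x, s ≤ x → HasDerivWithinAt f (f' x) (Ici s) x)
    (hg : ∀ x, s ≤ x → HasDerivWithinAt g (g' x) (Ici s) x) (hs : f s ≤ g s)
    (hst : s ≤ t) (h' : ∀ x ∈ Ico s t, f' x ≤ g' x) : f t ≤ g t :=
  image_le_of_deriv_right_le_deriv_boundary (fun x hx ↦ (hf x hx.1).continuousWithinAt.mono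
    Icc_subset_Ici_self) (fun x hx ↦ (hf x hx.1).mono (Ici_subset_Ici.2 hx.1)) hs
    (fun x hx ↦ (hg x hx.1).continuousWithinAt.mono Icc_subset_Ici_self)
    (fun x hx ↦ (hg x hx.1).mono (Ici_subset_Ici.2 hx.1)) h' ⟨hst, le_rfl⟩

lemma exists_pos_mul_le_of_eventually_le {f g : ℝ → ℝ} {x₀ ε : ℝ} (hf : MonotoneOn f (Ici x₀))
    (hf₀ : 0 < f x₀) (hg : MonotoneOn g (Ici x₀)) (hg₀ : ∀ x, x₀ ≤ x → 0 ≤ g x) (hε : 0 < ε)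
    (hev : ∀ᶠ x in atTop, ε * g x ≤ f x) : ∃ δ, 0 < δ ∧ ∀ x, x₀ ≤ x → δ * g x ≤ f x := by
  obtain ⟨T, hT⟩ := eventually_atTop.1 hev
  set T' := max T x₀
  have hgT' : 0 ≤ g T' := hg₀ T' (le_max_right _ _)
  refine ⟨min ε (f x₀ / (g T' + 1)), lt_min hε (by positivity), fun x hx ↦ ?_⟩
  rcases le_or_gt T x with hTx | hxT
  · calc min ε (f x₀ / (g T' + 1)) * g x ≤ ε * g x :=
          mul_le_mul_of_nonneg_right (min_le_left _ _) (hg₀ x hx)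
      _ ≤ f x := hT x hTx
  · calc min ε (f x₀ / (g T' + 1)) * g x ≤ f x₀ / (g T' + 1) * g T' :=
          mul_le_mul (min_le_right _ _)
            (hg hx (show x₀ ≤ T' from le_max_right _ _) (hxT.le.trans (le_max_left _ _)))
            (hg₀ x hx) (by positivity)
      _ ≤ f x₀ := by
          rw [div_mul_eq_mul_div, div_le_iff₀ (by positivity)]
          nlinarith
      _ ≤ f x := hf self_mem_Ici hx hx

lemma le_mul_one_add_two_log_of_le_mul_one_add_log {x R : ℝ} (hx : 0 ≤ x) (hR : 0 < R)
    (h : R ≤ x * (1 + log R)) : R ≤ x * (1 + 2 * log (2 * x)) := by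
  have hsqrt : 0 < √R := sqrt_pos.2 hR
  have hlogR : log R = 2 * log √R := by rw [log_sqrt hR.le]; ring
  have hsqrt_le : √R ≤ 2 * x := by
    have := log_le_sub_one_of_pos hsqrt
    have hR' : √R * √R = R := mul_self_sqrt hR.le
    nlinarith
  calc R ≤ x * (1 + log R) := h
    _ ≤ x * (1 + 2 * log (2 * x)) := by
      rw [hlogR]
      gcongr

lemma mul_one_add_log_le {t : ℝ} (ht : 1 ≤ t) :
    t * (1 + log t) ≤ (1 + log 2) / log 2 ^ 2 * ((1 + t) * log (1 + t) ^ 2) := by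
  have hℓ : 0 < log 2 := log_pos one_lt_two
  have hL : log 2 ≤ log (1 + t) := log_le_log two_pos (by linarith)
  have hlog : log t ≤ log (1 + t) := log_le_log (by linarith) (by linarith)
  have h1 : 1 + log (1 + t) ≤ (1 + log 2) / log 2 ^ 2 * log (1 + t) ^ 2 := by
    rw [div_mul_eq_mul_div, le_div_iff₀ (by positivity)]
    nlinarith [mul_le_mul hL hL hℓ.le (hℓ.le.trans hL), mul_le_mul_of_nonneg_left hL
      (mul_nonneg hℓ.le (hℓ.le.trans hL))]
  calc t * (1 + log t) ≤ (1 + t) * (1 + log (1 + t)) := by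
        gcongr
        · linarith [log_nonneg ht]
        · linarith
    _ ≤ (1 + t) * ((1 + log 2) / log 2 ^ 2 * log (1 + t) ^ 2) := by gcongr
    _ = _ := by ring

lemma hasDerivAt_one_add_mul_log_one_add {t : ℝ} (ht : -1 < t) :
    HasDerivAt (fun s ↦ (1 + s) * log (1 + s)) (log (1 + t) + 1) t := by
  have h1 : HasDerivAt (fun s : ℝ ↦ 1 + s) 1 t := (hasDerivAt_id t).const_add 1
  have ht' : 1 + t ≠ 0 := by linarith
  refine (h1.mul (h1.log ht')).congr_deriv ?_
  field_simp

lemma monotoneOn_one_add_mul_log_one_add :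
    MonotoneOn (fun t : ℝ ↦ (1 + t) * log (1 + t)) (Ici 0) := fun s hs t _ hst ↦ by
  have hs : (0 : ℝ) ≤ s := hs
  dsimp only
  gcongr
  · exact log_nonneg (by linarith)
  · linarith

def SolvesLogFlow (a b : ℝ) (ρ : ℝ → ℝ) : Prop :=
  ∀ t, 0 ≤ t → HasDerivWithinAt ρ (a * log (ρ t) + b) (Ici 0) t

namespace SolvesLogFlow

variable {a b : ℝ} {ρ : ℝ → ℝ}

lemma continuousOn (hρ : SolvesLogFlow a b ρ) : ContinuousOn ρ (Ici 0) :=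
  fun t ht ↦ (hρ t ht).continuousWithinAt

lemma apply_zero_le (hρ : SolvesLogFlow a b ρ) (h₀ : 0 < a * log (ρ 0) + b) {t : ℝ}
    (ht : 0 ≤ t) : ρ 0 ≤ ρ t :=
  image_le_of_deriv_right_lt_deriv_boundary' (f' := 0) continuousOn_const
    (fun x _ ↦ hasDerivWithinAt_const _ _ _) le_rfl
    (hρ.continuousOn.mono Icc_subset_Ici_self) (fun x hx ↦ (hρ x hx.1).mono (Ici_subset_Ici.2 hx.1))
    (fun x _ hx ↦ by simpa [← hx] using h₀) ⟨ht, le_rfl⟩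

lemma strictMonoOn (hρ : SolvesLogFlow a b ρ) (ha : 0 ≤ a) (hρ₀ : 0 < ρ 0)
    (h₀ : 0 < a * log (ρ 0) + b) : StrictMonoOn ρ (Ici 0) := by
  refine strictMonoOn_of_hasDerivWithinAt_pos (f' := fun x ↦ a * log (ρ x) + b) (convex_Ici 0)
    hρ.continuousOn (fun x hx ↦ ?_) (fun x hx ↦ ?_) <;> rw [interior_Ici] at hx
  · exact ((hρ x hx.le).hasDerivAt (Ici_mem_nhds hx)).hasDerivWithinAt
  · exact h₀.trans_le (by gcongr; exact hρ.apply_zero_le h₀ hx.le)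

lemma add_mul_le (hρ : SolvesLogFlow a b ρ) (ha : 0 ≤ a) (hρ₀ : 0 < ρ 0)
    (h₀ : 0 < a * log (ρ 0) + b) {t : ℝ} (ht : 0 ≤ t) :
    ρ 0 + (a * log (ρ 0) + b) * t ≤ ρ t :=
  le_of_hasDerivWithinAt_Ici (f := fun x ↦ ρ 0 + (a * log (ρ 0) + b) * x)
    (fun x _ ↦ ((hasDerivAt_const_mul _).const_add (ρ 0)).hasDerivWithinAt)
    hρ (by simp) ht (fun x hx ↦ by gcongr; exact hρ.apply_zero_le h₀ hx.1)

lemma le_add_mul (hρ : SolvesLogFlow a b ρ) (ha : 0 ≤ a) (hρ₀ : 0 < ρ 0)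
    (h₀ : 0 < a * log (ρ 0) + b) {t : ℝ} (ht : 0 ≤ t) :
    ρ t ≤ ρ 0 + (a * log (ρ t) + b) * t :=
  le_of_hasDerivWithinAt_Ici (g := fun x ↦ ρ 0 + (a * log (ρ t) + b) * x) hρ
    (fun x _ ↦ ((hasDerivAt_const_mul _).const_add (ρ 0)).hasDerivWithinAt)
    (by simp) ht (fun x hx ↦ by
      have := hρ₀.trans_le (hρ.apply_zero_le h₀ hx.1)
      gcongr
      exact (hρ.strictMonoOn ha hρ₀ h₀).monotoneOn hx.1 ht hx.2.le)

lemma exists_mul_one_add_le (hρ : SolvesLogFlow a b ρ) (ha : 0 ≤ a) (hρ₀ : 0 < ρ 0)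
    (h₀ : 0 < a * log (ρ 0) + b) : ∃ m, 0 < m ∧ ∀ t, 0 ≤ t → m * (1 + t) ≤ ρ t := by
  refine ⟨min (ρ 0) (a * log (ρ 0) + b), lt_min hρ₀ h₀, fun t ht ↦ ?_⟩
  have := hρ.add_mul_le ha hρ₀ h₀ ht
  nlinarith [min_le_left (ρ 0) (a * log (ρ 0) + b), min_le_right (ρ 0) (a * log (ρ 0) + b)]

-- Integrating `ρ' ≥ a log (m (1 + t)) + b`.
lemma add_mul_log_le (hρ : SolvesLogFlow a b ρ) (ha : 0 ≤ a) {m : ℝ} (hm : 0 < m)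
    (hlin : ∀ t, 0 ≤ t → m * (1 + t) ≤ ρ t) {t : ℝ} (ht : 0 ≤ t) :
    ρ 0 + a * ((1 + t) * log (1 + t)) + (a * log m + b - a) * t ≤ ρ t := by
  refine le_of_hasDerivWithinAt_Ici
    (f := fun x ↦ ρ 0 + a * ((1 + x) * log (1 + x)) + (a * log m + b - a) * x)
    (f' := fun x ↦ a * (log (1 + x) + 1) + (a * log m + b - a)) (fun x hx ↦ ?_) hρ (by simp) ht
    (fun x hx ↦ ?_)
  · exact ((((hasDerivAt_one_add_mul_log_one_add (by linarith)).const_mul a).const_add (ρ 0)).add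
      ((hasDerivAt_id x).const_mul _)).hasDerivWithinAt.congr_deriv (by ring)
  · have hx' : 0 < 1 + x := by linarith [hx.1]
    have := log_le_log (by positivity) (hlin x hx.1)
    rw [log_mul hm.ne' hx'.ne'] at this
    nlinarith

lemma eventually_half_mul_le (hρ : SolvesLogFlow a b ρ) (ha : 0 < a) (hρ₀ : 0 < ρ 0)
    (h₀ : 0 < a * log (ρ 0) + b) : ∀ᶠ t in atTop, a / 2 * ((1 + t) * log (1 + t)) ≤ ρ t := by
  obtain ⟨m, hm, hlin⟩ := hρ.exists_mul_one_add_le ha.le hρ₀ h₀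
  set k := a - a * log m - b
  have hlog : Tendsto (fun t : ℝ ↦ log (1 + t)) atTop atTop :=
    tendsto_log_atTop.comp (tendsto_atTop_add_const_left _ 1 tendsto_id)
  filter_upwards [eventually_ge_atTop 0, hlog.eventually_ge_atTop (2 * |k| / a)] with t ht hkt
  have hint := hρ.add_mul_log_le ha.le hm hlin ht
  -- `a/2 · (1+t) log (1+t) ≥ |k| (1 + t) ≥ k t` once `log (1 + t) ≥ 2|k|/a`
  have hk : |k| ≤ a / 2 * log (1 + t) := by
    rw [div_le_iff₀ ha] at hkt
    linarith
  nlinarith [le_abs_self k, abs_nonneg k,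
    mul_le_mul_of_nonneg_left hk (by linarith : (0 : ℝ) ≤ 1 + t)]

lemma exists_le_mul_one_add_mul_log_sq (hρ : SolvesLogFlow a b ρ) (ha : 0 ≤ a) (hρ₀ : 0 < ρ 0)
    (h₀ : 0 < a * log (ρ 0) + b) :
    ∃ K, ∀ t, 1 ≤ t → ρ t ≤ K * (1 + (1 + t) * log (1 + t) ^ 2) := by
  set C := ρ 0 + a + |b|
  have hC : 0 < C := by positivity
  set D := 2 * C * (1 + |log (2 * C)|) * ((1 + log 2) / log 2 ^ 2)
  refine ⟨max 1 D, fun t ht ↦ ?_⟩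
  have hX : 0 ≤ (1 + t) * log (1 + t) ^ 2 := by positivity
  have hρt : 0 < ρ t := hρ₀.trans_le (hρ.apply_zero_le h₀ (by linarith))
  rcases le_or_gt (log (ρ t)) 0 with hL | hL
  · have : ρ t ≤ 1 := (log_nonpos_iff hρt.le).1 hL
    nlinarith [le_max_left 1 D, mul_le_mul_of_nonneg_right (le_max_left 1 D) hX]
  have hCt : 0 ≤ C * t := by positivity
  have hup : ρ t ≤ C * t * (1 + log (ρ t)) := by
    nlinarith [hρ.le_add_mul ha hρ₀ h₀ (by linarith : (0 : ℝ) ≤ t), le_abs_self b, abs_nonneg b,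
      mul_le_mul_of_nonneg_right ht hρ₀.le, mul_nonneg (by linarith : (0 : ℝ) ≤ t) hL.le,
      mul_nonneg (mul_nonneg ha (by linarith : (0 : ℝ) ≤ t)) hL.le,
      mul_nonneg (mul_nonneg (abs_nonneg b) (by linarith : (0 : ℝ) ≤ t)) hL.le,
      mul_nonneg (mul_nonneg hρ₀.le (by linarith : (0 : ℝ) ≤ t)) hL.le]
  have hlog : 1 + 2 * log (2 * (C * t)) ≤ 2 * (1 + |log (2 * C)|) * (1 + log t) := by
    rw [← mul_assoc, log_mul (by positivity) (by positivity)]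
    nlinarith [le_abs_self (log (2 * C)), abs_nonneg (log (2 * C)), log_nonneg ht,
      mul_nonneg (abs_nonneg (log (2 * C))) (log_nonneg ht)]
  calc ρ t ≤ C * t * (1 + 2 * log (2 * (C * t))) :=
        le_mul_one_add_two_log_of_le_mul_one_add_log hCt hρt hup
    _ ≤ C * t * (2 * (1 + |log (2 * C)|) * (1 + log t)) := by gcongr
    _ = 2 * C * (1 + |log (2 * C)|) * (t * (1 + log t)) := by ring
    _ ≤ 2 * C * (1 + |log (2 * C)|) * ((1 + log 2) / log 2 ^ 2 * ((1 + t) * log (1 + t) ^ 2)) :=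
        mul_le_mul_of_nonneg_left (mul_one_add_log_le ht) (by positivity)
    _ = D * ((1 + t) * log (1 + t) ^ 2) := by ring
    _ ≤ max 1 D * (1 + (1 + t) * log (1 + t) ^ 2) :=
        mul_le_mul (le_max_right 1 D) (by linarith) hX (by positivity)

end SolvesLogFlow

/-- growth of expanding spheres, inequality `ungleichung3` in the
paper. A positive solution of `ρ' = a log ρ + b` with `a > 0` and
`a log ρ(0) + b > 0` is strictly increasing and satisfies
`c⁻¹ (1+t) log(1+t) ≤ ρ(t) ≤ c (1 + (1+t) log²(1+t))` for `t ≥ 1`. -/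
theorem stmt_6 (a b : ℝ) (ha : 0 < a) (ρ : ℝ → ℝ)
    (hpos : ∀ t : ℝ, 0 ≤ t → 0 < ρ t)
    (hode : ∀ t : ℝ, 0 ≤ t →
      HasDerivWithinAt ρ (a * Real.log (ρ t) + b) (Set.Ici 0) t)
    (h0 : 0 < a * Real.log (ρ 0) + b) :
    StrictMonoOn ρ (Set.Ici 0) ∧
      ∃ c : ℝ, 1 ≤ c ∧ ∀ t : ℝ, 1 ≤ t →
        c⁻¹ * (1 + t) * Real.log (1 + t) ≤ ρ t ∧
        ρ t ≤ c * (1 + (1 + t) * (Real.log (1 + t)) ^ 2) := by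
  have hρ : SolvesLogFlow a b ρ := hode
  have hρ₀ := hpos 0 le_rfl
  have hmono := hρ.strictMonoOn ha.le hρ₀ h0
  obtain ⟨δ, hδ, hlower⟩ := exists_pos_mul_le_of_eventually_le
    (hmono.monotoneOn.mono (Ici_subset_Ici.2 zero_le_one)) (hpos 1 zero_le_one)
    (monotoneOn_one_add_mul_log_one_add.mono (Ici_subset_Ici.2 zero_le_one))
    (fun t ht ↦ mul_nonneg (by linarith) (log_nonneg (by linarith))) (half_pos ha)
    (hρ.eventually_half_mul_le ha hρ₀ h0)
  obtain ⟨K, hupper⟩ := hρ.exists_le_mul_one_add_mul_log_sq ha.le hρ₀ h0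
  set c := max (max 1 K) δ⁻¹
  refine ⟨hmono, c, le_max_of_le_left (le_max_left 1 K), fun t ht ↦ ⟨?_, ?_⟩⟩
  · have hcδ : c⁻¹ ≤ δ := inv_le_of_inv_le₀ hδ (le_max_right _ _)
    calc c⁻¹ * (1 + t) * log (1 + t) = c⁻¹ * ((1 + t) * log (1 + t)) := mul_assoc _ _ _
      _ ≤ δ * ((1 + t) * log (1 + t)) :=
        mul_le_mul_of_nonneg_right hcδ (mul_nonneg (by linarith) (log_nonneg (by linarith)))
      _ ≤ ρ t := hlower t ht
  · exact (hupper t ht).trans (mul_le_mul_of_nonneg_right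
      (le_max_of_le_left (le_max_right 1 K)) (by positivity))
end

section
/- Let a > 0 and b ∈ ℝ. (i) If T > 0 and ρ : [0,T] → (0,∞) is differentiable with ρ'(t) = a·log ρ(t) + b for all t ∈ [0,T] and a·log ρ(0) + b < 0, then T < ρ(0)/(−(a·log ρ(0) + b)); in particular such a positive solution cannot exist for all time, i.e. the solution reaches zero in finite time. (ii) If ρ : [0,∞) → (0,∞) is differentiable with ρ'(t) = a·log ρ(t) + b for all t ≥ 0 and a·log ρ(0) + b > 0, then ρ is strictly increasing and ρ(t) → ∞ as t → ∞. -/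
/-!
Write `g y = a log y + b` and `c = g (ρ 0)`. If `c < 0`, the solution can never climb back to
`ρ 0`, since at any time where `ρ = ρ 0` its derivative is `c < 0`. Hence `ρ ≤ ρ 0`, and as `g` is
increasing, `ρ' = g ρ ≤ c`; so `0 < ρ T ≤ ρ 0 + c T`, which bounds `T`. The case `c > 0` is the
mirror image: `ρ ≥ ρ 0`, so `ρ' ≥ c > 0` and `ρ t ≥ ρ 0 + c t → ∞`.
-/

open Set Filter

theorem hasDerivWithinAt_const_add_mul (x₀ c t : ℝ) :
    HasDerivWithinAt (fun s => x₀ + c * s) c (Ici t) t := by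
  simpa using ((hasDerivWithinAt_id t (Ici t)).const_mul c).const_add x₀

namespace AutonomousODE

variable {g ρ : ℝ → ℝ} {T : ℝ}

theorem hasDerivWithinAt_Ici (hρ : ∀ t ∈ Icc 0 T, HasDerivWithinAt ρ (g (ρ t)) (Icc 0 T) t)
    {t : ℝ} (ht : t ∈ Ico 0 T) : HasDerivWithinAt ρ (g (ρ t)) (Ici t) t :=
  (hρ t (Ico_subset_Icc_self ht)).mono_of_mem_nhdsWithin (Icc_mem_nhdsGE_of_mem ht)

theorem le_initial_of_neg (hρ : ∀ t ∈ Icc 0 T, HasDerivWithinAt ρ (g (ρ t)) (Icc 0 T) t)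
    (hc : g (ρ 0) < 0) : ∀ t ∈ Icc 0 T, ρ t ≤ ρ 0 :=
  image_le_of_deriv_right_lt_deriv_boundary' (HasDerivWithinAt.continuousOn hρ)
    (fun _ ht => hasDerivWithinAt_Ici hρ ht) le_rfl continuousOn_const
    (fun _ _ => hasDerivWithinAt_const _ _ _) fun _ _ h => h ▸ hc

theorem initial_le_of_pos (hρ : ∀ t ∈ Icc 0 T, HasDerivWithinAt ρ (g (ρ t)) (Icc 0 T) t)
    (hc : 0 < g (ρ 0)) : ∀ t ∈ Icc 0 T, ρ 0 ≤ ρ t :=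
  image_le_of_deriv_right_lt_deriv_boundary' continuousOn_const
    (fun _ _ => hasDerivWithinAt_const _ _ _) le_rfl (HasDerivWithinAt.continuousOn hρ)
    (fun _ ht => hasDerivWithinAt_Ici hρ ht) fun _ _ h => h ▸ hc

theorem le_initial_add_mul_of_neg
    (hρ : ∀ t ∈ Icc 0 T, HasDerivWithinAt ρ (g (ρ t)) (Icc 0 T) t)
    (hg : MonotoneOn g (ρ '' Icc 0 T)) (hc : g (ρ 0) < 0) :
    ∀ t ∈ Icc 0 T, ρ t ≤ ρ 0 + g (ρ 0) * t := by
  refine image_le_of_deriv_right_le_deriv_boundary (HasDerivWithinAt.continuousOn hρ)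
    (fun _ ht => hasDerivWithinAt_Ici hρ ht) (by simp) (by fun_prop)
    (fun t _ => hasDerivWithinAt_const_add_mul _ _ t) fun t ht => ?_
  have h0 : (0 : ℝ) ∈ Icc 0 T := ⟨le_rfl, ht.1.trans ht.2.le⟩
  exact hg (mem_image_of_mem ρ (Ico_subset_Icc_self ht)) (mem_image_of_mem ρ h0)
    (le_initial_of_neg hρ hc t (Ico_subset_Icc_self ht))

theorem initial_add_mul_le_of_pos
    (hρ : ∀ t ∈ Icc 0 T, HasDerivWithinAt ρ (g (ρ t)) (Icc 0 T) t)
    (hg : MonotoneOn g (ρ '' Icc 0 T)) (hc : 0 < g (ρ 0)) :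
    ∀ t ∈ Icc 0 T, ρ 0 + g (ρ 0) * t ≤ ρ t := by
  refine image_le_of_deriv_right_le_deriv_boundary (by fun_prop)
    (fun t _ => hasDerivWithinAt_const_add_mul _ _ t) (by simp)
    (HasDerivWithinAt.continuousOn hρ) (fun _ ht => hasDerivWithinAt_Ici hρ ht) fun t ht => ?_
  have h0 : (0 : ℝ) ∈ Icc 0 T := ⟨le_rfl, ht.1.trans ht.2.le⟩
  exact hg (mem_image_of_mem ρ h0) (mem_image_of_mem ρ (Ico_subset_Icc_self ht))
    (initial_le_of_pos hρ hc t (Ico_subset_Icc_self ht))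

theorem hasDerivWithinAt_Icc_of_Ici
    (hρ : ∀ t, 0 ≤ t → HasDerivWithinAt ρ (g (ρ t)) (Ici 0) t) :
    ∀ t ∈ Icc 0 T, HasDerivWithinAt ρ (g (ρ t)) (Icc 0 T) t :=
  fun t ht => (hρ t ht.1).mono Icc_subset_Ici_self

theorem strictMonoOn_Ici_of_pos (hρ : ∀ t, 0 ≤ t → HasDerivWithinAt ρ (g (ρ t)) (Ici 0) t)
    (hg : MonotoneOn g (ρ '' Ici 0)) (hc : 0 < g (ρ 0)) : StrictMonoOn ρ (Ici 0) := by
  refine strictMonoOn_of_hasDerivWithinAt_pos (convex_Ici 0) (HasDerivWithinAt.continuousOn hρ)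
    (fun t ht => (hρ t (interior_subset ht)).mono interior_subset) fun t ht => ?_
  have ht : (0 : ℝ) ≤ t := interior_subset ht
  calc 0 < g (ρ 0) := hc
    _ ≤ g (ρ t) := hg (mem_image_of_mem ρ self_mem_Ici) (mem_image_of_mem ρ ht)
      (initial_le_of_pos (hasDerivWithinAt_Icc_of_Ici hρ) hc t ⟨ht, le_rfl⟩)

theorem tendsto_atTop_of_pos (hρ : ∀ t, 0 ≤ t → HasDerivWithinAt ρ (g (ρ t)) (Ici 0) t)
    (hg : MonotoneOn g (ρ '' Ici 0)) (hc : 0 < g (ρ 0)) : Tendsto ρ atTop atTop := by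
  have hlin : ∀ t, 0 ≤ t → ρ 0 + g (ρ 0) * t ≤ ρ t := fun t ht =>
    initial_add_mul_le_of_pos (hasDerivWithinAt_Icc_of_Ici hρ)
      (hg.mono (image_mono Icc_subset_Ici_self)) hc t ⟨ht, le_rfl⟩
  exact tendsto_atTop_mono' atTop (eventually_atTop.2 ⟨0, hlin⟩)
    (tendsto_atTop_add_const_left atTop (ρ 0) (tendsto_id.const_mul_atTop hc))

end AutonomousODE

theorem monotoneOn_mul_log_add {a : ℝ} (ha : 0 ≤ a) (b : ℝ) :
    MonotoneOn (fun y => a * Real.log y + b) (Ioi 0) :=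
  fun _ hx _ _ hxy => by
    dsimp only
    gcongr

/-- dichotomy for round spheres under the logarithmic curvature flow.
(i) A positive solution of `ρ' = a log ρ + b` on `[0,T]` with `a log ρ(0) + b < 0`
forces `T < ρ(0)/(−(a log ρ(0) + b))`, so such a solution reaches zero in finite time.
(ii) A positive solution on `[0,∞)` with `a log ρ(0) + b > 0` is strictly increasing
and tends to infinity. -/
theorem stmt_8 (a b : ℝ) (ha : 0 < a) :
    (∀ T : ℝ, 0 < T → ∀ ρ : ℝ → ℝ,
      (∀ t ∈ Icc (0 : ℝ) T, 0 < ρ t) →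
      (∀ t ∈ Icc (0 : ℝ) T,
        HasDerivWithinAt ρ (a * Real.log (ρ t) + b) (Icc 0 T) t) →
      a * Real.log (ρ 0) + b < 0 →
      T < ρ 0 / (-(a * Real.log (ρ 0) + b))) ∧
    (∀ ρ : ℝ → ℝ,
      (∀ t : ℝ, 0 ≤ t → 0 < ρ t) →
      (∀ t : ℝ, 0 ≤ t →
        HasDerivWithinAt ρ (a * Real.log (ρ t) + b) (Set.Ici 0) t) →
      0 < a * Real.log (ρ 0) + b →
      StrictMonoOn ρ (Set.Ici 0) ∧ Tendsto ρ atTop atTop) := by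
  have hg := monotoneOn_mul_log_add ha.le b
  constructor
  · intro T hT ρ hpos hρ hc
    have hT' : T ∈ Icc 0 T := ⟨hT.le, le_rfl⟩
    have hlin := AutonomousODE.le_initial_add_mul_of_neg (g := fun y => a * Real.log y + b) hρ
      (hg.mono (image_subset_iff.2 hpos)) hc T hT'
    rw [lt_div_iff₀ (neg_pos.2 hc)]
    linarith [hpos T hT']
  · intro ρ hpos hρ hc
    have hgρ : MonotoneOn (fun y => a * Real.log y + b) (ρ '' Ici 0) :=
      hg.mono (image_subset_iff.2 hpos)
    exact ⟨AutonomousODE.strictMonoOn_Ici_of_pos hρ hgρ hc,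
      AutonomousODE.tendsto_atTop_of_pos hρ hgρ hc⟩
end

section
/- Let n ≥ 1, let U = (u_{ij})_{1 ≤ i,j ≤ n} be a real symmetric n×n matrix, let y₁ ∈ ℝ, set λ = √(1 + y₁²), and let r ∈ ℝ with r ≠ 0. Define the (n+1)×(n+1) matrix B (indices 0,…,n) by B₀₀ = −λ²/r, B₀₁ = B₁₀ = y₁, B₀ⱼ = Bⱼ₀ = 0 for 2 ≤ j ≤ n, and Bᵢⱼ = λ·u_{ij} − r·δ_{ij} for 1 ≤ i,j ≤ n. Define the n×n matrix A by A₁₁ = λ³·u₁₁, A₁ⱼ = Aⱼ₁ = λ²·u_{1j} for 2 ≤ j ≤ n, and Aᵢⱼ = λ·u_{ij} for 2 ≤ i,j ≤ n. Then det B = 0 if and only if det(A − r·Iₙ) = 0, i.e. if and only if r is an eigenvalue of A. -/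
open Matrix

/-!
Both determinants reduce to that of `M = λU − r·diag(λ⁻², 1, …, 1)`. Expanding `det B` along its
scalar corner `−λ²/r` (Schur complement) adds `(r y₁²/λ²)·E₀₀` to `λU − rI`, and since
`1 − y₁²/λ² = λ⁻²` the result is `M`. On the other side `A = D(λU)D` with `D = diag(λ, 1, …, 1)`,
so `A − rI = D M D`.
-/

namespace Matrix

variable {K : Type*} [Field K] {m : Type*} [Fintype m] [DecidableEq m]

theorem det_fromBlocks_scalar_corner (a : K) (ha : a ≠ 0) (v w : m → K) (D : Matrix m m K) :
    (fromBlocks (of fun _ _ => a : Matrix (Fin 1) (Fin 1) K) (of fun _ j => v j)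
      (of fun i _ => w i) D).det = a * (D - a⁻¹ • vecMulVec w v).det := by
  let _ : Invertible (of fun _ _ => a : Matrix (Fin 1) (Fin 1) K) :=
    ⟨of fun _ _ => a⁻¹, by ext i j; obtain rfl := Subsingleton.elim i j; simp [mul_apply, ha],
      by ext i j; obtain rfl := Subsingleton.elim i j; simp [mul_apply, ha]⟩
  rw [det_fromBlocks₁₁, det_unique]
  congr 2
  ext i j
  simp [mul_apply, vecMulVec_apply, mul_comm, mul_assoc]

theorem diagonal_mul_mul_diagonal_sub_smul_one (d : m → K) (hd : ∀ i, d i ≠ 0)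
    (X : Matrix m m K) (r : K) :
    diagonal d * X * diagonal d - r • 1
      = diagonal d * (X - r • diagonal fun i => (d i ^ 2)⁻¹) * diagonal d := by
  ext i j
  by_cases hij : i = j
  · subst hij
    have := hd i
    simp only [sub_apply, mul_diagonal, diagonal_mul, smul_apply, one_apply_eq, smul_eq_mul,
      mul_one, mul_sub, Algebra.mul_smul_comm, diagonal_mul_diagonal, diagonal_apply_eq]
    field_simp
  · simp [mul_sub, hij]

theorem det_diagonal_mul_mul_diagonal_sub_smul_one (d : m → K) (hd : ∀ i, d i ≠ 0)
    (X : Matrix m m K) (r : K) :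
    (diagonal d * X * diagonal d - r • 1).det
      = (∏ i, d i) ^ 2 * (X - r • diagonal fun i => (d i ^ 2)⁻¹).det := by
  rw [diagonal_mul_mul_diagonal_sub_smul_one d hd, det_mul, det_mul, det_diagonal]
  ring

end Matrix

theorem stmt_9_general (n : ℕ) (U : Matrix (Fin (n + 1)) (Fin (n + 1)) ℝ)
    (y₁ r : ℝ) (hr : r ≠ 0) (l : ℝ) (hl : l = Real.sqrt (1 + y₁ ^ 2))
    (B : Matrix (Fin 1 ⊕ Fin (n + 1)) (Fin 1 ⊕ Fin (n + 1)) ℝ)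
    (hB : B = Matrix.fromBlocks
      (Matrix.of fun _ _ => -l ^ 2 / r)
      (Matrix.of fun _ j => if j = 0 then y₁ else 0)
      (Matrix.of fun i _ => if i = 0 then y₁ else 0)
      (l • U - r • (1 : Matrix (Fin (n + 1)) (Fin (n + 1)) ℝ)))
    (A : Matrix (Fin (n + 1)) (Fin (n + 1)) ℝ)
    (hA : A = Matrix.of fun i j =>
      if i = 0 ∧ j = 0 then l ^ 3 * U i j
      else if i = 0 ∨ j = 0 then l ^ 2 * U i j
      else l * U i j) :
    B.det = 0 ↔ (A - r • (1 : Matrix (Fin (n + 1)) (Fin (n + 1)) ℝ)).det = 0 := by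
  have hl_pos : 0 < l := hl ▸ Real.sqrt_pos.mpr (by positivity)
  have hl_sq : l ^ 2 = 1 + y₁ ^ 2 := by rw [hl, Real.sq_sqrt (by positivity)]
  set d : Fin (n + 1) → ℝ := fun i => if i = 0 then l else 1
  have hd : ∀ i, d i ≠ 0 := fun i => by by_cases hi : i = 0 <;> simp [d, hi, hl_pos.ne']
  have hA_eq : A = diagonal d * (l • U) * diagonal d := by
    ext i j
    by_cases hi : i = 0 <;> by_cases hj : j = 0 <;> simp [hA, d, hi, hj] <;> ring
  have h_corner : -l ^ 2 / r ≠ 0 := div_ne_zero (neg_ne_zero.mpr (pow_ne_zero 2 hl_pos.ne')) hr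
  have hB_det : B.det = -l ^ 2 / r * (l • U - r • diagonal fun i => (d i ^ 2)⁻¹).det := by
    rw [hB, det_fromBlocks_scalar_corner _ h_corner]
    congr 2
    ext i j
    by_cases hi : i = 0 <;> by_cases hj : j = 0
    · subst hi hj
      simp only [inv_div, Matrix.sub_apply, Matrix.smul_apply, smul_eq_mul, one_apply_eq, mul_one,
        vecMulVec_apply, ↓reduceIte, ite_pow, one_pow, diagonal_apply_eq, d]
      field_simp
      linear_combination (-r) * hl_sq
    all_goals simp [d, vecMulVec_apply, hi, hj, eq_comm, one_apply, diagonal_apply]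
  rw [hB_det, hA_eq, det_diagonal_mul_mul_diagonal_sub_smul_one d hd,
    mul_eq_zero, mul_eq_zero, or_iff_right, or_iff_right]
  · exact pow_ne_zero 2 (Finset.prod_ne_zero_iff.mpr fun i _ => hd i)
  · exact h_corner

/-- computation `spezGl` in the paper. With `B` the bordered matrix
built from the Hessian `U`, `y₁` and `λ = √(1+y₁²)`, and `A` the matrix obtained from
`λU` by multiplying the first row and first column by `λ`, a nonzero `r` satisfies
`det B = 0` iff `r` is an eigenvalue of `A`, i.e. `det(A − r·I) = 0`. -/
theorem stmt_9 (n : ℕ) (U : Matrix (Fin (n + 1)) (Fin (n + 1)) ℝ) (hU : U.IsSymm)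
    (y₁ r : ℝ) (hr : r ≠ 0) (l : ℝ) (hl : l = Real.sqrt (1 + y₁ ^ 2))
    (B : Matrix (Fin 1 ⊕ Fin (n + 1)) (Fin 1 ⊕ Fin (n + 1)) ℝ)
    (hB : B = Matrix.fromBlocks
      (Matrix.of fun _ _ => -l ^ 2 / r)
      (Matrix.of fun _ j => if j = 0 then y₁ else 0)
      (Matrix.of fun i _ => if i = 0 then y₁ else 0)
      (l • U - r • (1 : Matrix (Fin (n + 1)) (Fin (n + 1)) ℝ)))
    (A : Matrix (Fin (n + 1)) (Fin (n + 1)) ℝ)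
    (hA : A = Matrix.of fun i j =>
      if i = 0 ∧ j = 0 then l ^ 3 * U i j
      else if i = 0 ∨ j = 0 then l ^ 2 * U i j
      else l * U i j) :
    B.det = 0 ↔ (A - r • (1 : Matrix (Fin (n + 1)) (Fin (n + 1)) ℝ)).det = 0 :=
  stmt_9_general n U y₁ r hr l hl B hB A hA
end

section
/- Let n ≥ 1, let σ be the surface (spherical) measure on the unit sphere Sⁿ ⊆ ℝ^{n+1}, and let f : Sⁿ → ℝ be continuous and positive. Then there exists exactly one ξ ∈ ℝ^{n+1} such that ∫_{Sⁿ} x · e^{−⟨ξ, x⟩} / f(x) dσ(x) = 0 (a vector equation in ℝ^{n+1}, i.e. ∫_{Sⁿ} xᵢ · e^{−⟨ξ, x⟩}/f(x) dσ(x) = 0 for every coordinate i = 1, …, n+1). -/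
/-!
The integral is `-∇Φ(ξ)` for the convex function `Φ(ξ) = ∫ e^{-⟨ξ,x⟩} / f(x) dσ(x)`.
Every open half-sphere `{⟨u, x⟩ < 0}` has positive measure, so, as `e^s ≥ max s 0`,
`Φ` grows at least linearly and attains its minimum, where its gradient vanishes.
For uniqueness, `⟨η - ξ, ∇Φ(η) - ∇Φ(ξ)⟩` is the integral of
`(⟨η,x⟩ - ⟨ξ,x⟩)(e^{-⟨ξ,x⟩} - e^{-⟨η,x⟩}) / f(x) ≥ 0`, which is positive on the
half-sphere `{⟨η - ξ, x⟩ < 0}`.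
-/

open Set MeasureTheory

/-- The surface (spherical) measure on the unit sphere `Sⁿ ⊆ ℝ^{n+1}`. -/
noncomputable def sphereMeasure (n : ℕ) :
    Measure (Metric.sphere (0 : EuclideanSpace ℝ (Fin (n + 1))) 1) :=
  (volume : Measure (EuclideanSpace ℝ (Fin (n + 1)))).toSphere

open Metric Filter Topology Real
open scoped RealInnerProductSpace

theorem sub_mul_exp_neg_sub_exp_neg_pos {a b : ℝ} (h : a ≠ b) :
    0 < (b - a) * (exp (-a) - exp (-b)) := by
  rcases h.lt_or_gt with h | h
  · exact mul_pos (sub_pos.mpr h) (sub_pos.mpr (exp_lt_exp.mpr (neg_lt_neg h)))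
  · exact mul_pos_of_neg_of_neg (sub_neg.mpr h) (sub_neg.mpr (exp_lt_exp.mpr (neg_lt_neg h)))

theorem sub_mul_exp_neg_sub_exp_neg_nonneg (a b : ℝ) :
    0 ≤ (b - a) * (exp (-a) - exp (-b)) := by
  rcases eq_or_ne a b with rfl | h
  · simp
  · exact (sub_mul_exp_neg_sub_exp_neg_pos h).le

theorem exists_pos_mul_norm_le_of_homogeneous {E : Type*} [NormedAddCommGroup E]
    [NormedSpace ℝ E] [FiniteDimensional ℝ E] {N : E → ℝ} (hN : Continuous N)
    (hsmul : ∀ c : ℝ, 0 ≤ c → ∀ x, N (c • x) = c * N x) (hpos : ∀ x, x ≠ 0 → 0 < N x) :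
    ∃ m > 0, ∀ x, m * ‖x‖ ≤ N x := by
  obtain ⟨m, hm, hmN⟩ := (isCompact_sphere (0 : E) 1).exists_forall_le' hN.continuousOn
    fun u hu => hpos u (ne_zero_of_mem_unit_sphere ⟨u, hu⟩)
  refine ⟨m, hm, fun x => ?_⟩
  rcases eq_or_ne x 0 with rfl | hx
  · have hN0 : N 0 = 0 := by simpa using hsmul 0 le_rfl 0
    simp [hN0]
  have hu : ‖x‖⁻¹ • x ∈ sphere (0 : E) 1 := by simp [norm_smul, hx]
  calc m * ‖x‖ ≤ N (‖x‖⁻¹ • x) * ‖x‖ := by gcongr; exact hmN _ hu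
    _ = N x := by
      rw [mul_comm, ← hsmul _ (norm_nonneg x), smul_inv_smul₀ (norm_ne_zero_iff.mpr hx)]

theorem MeasureTheory.Measure.toSphere_setOf_inner_neg_pos {E : Type*} [NormedAddCommGroup E]
    [InnerProductSpace ℝ E] [FiniteDimensional ℝ E] [MeasurableSpace E] [BorelSpace E]
    (μ : Measure E) [μ.IsOpenPosMeasure] {u : E} (hu : u ≠ 0) :
    0 < μ.toSphere {x | ⟪u, (x : E)⟫ < 0} := by
  refine (isOpen_lt (by fun_prop) continuous_const).measure_pos _
    ⟨⟨-(‖u‖⁻¹ • u), by simp [norm_smul, hu]⟩, ?_⟩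
  simp [inner_smul_right, hu]

section CompactDomain

variable {X : Type*} [TopologicalSpace X] [CompactSpace X] [MeasurableSpace X]
  [OpensMeasurableSpace X] {μ : Measure X} [IsFiniteMeasure μ]

theorem Continuous.integrable_of_compactSpace {G : Type*} [NormedAddCommGroup G] {g : X → G}
    (hg : Continuous g) : Integrable g μ := by
  obtain ⟨C, hC⟩ := (isCompact_range hg).isBounded.exists_norm_le
  exact (integrable_const C).mono' hg.aestronglyMeasurable_of_compactSpace
    (ae_of_all _ fun x => hC _ ⟨x, rfl⟩)

theorem Continuous.integral_pos_of_pos_on {g : X → ℝ} (hg : Continuous g) (hg_nonneg : 0 ≤ g)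
    {s : Set X} (hs : 0 < μ s) (hgs : ∀ x ∈ s, 0 < g x) : 0 < ∫ x, g x ∂μ :=
  (integral_pos_iff_support_of_nonneg hg_nonneg hg.integrable_of_compactSpace).mpr
    (hs.trans_le (measure_mono fun x hx => (hgs x hx).ne'))

theorem hasDerivAt_integral_of_continuous {G : Type*} [NormedAddCommGroup G] [NormedSpace ℝ G]
    {F F' : ℝ → X → G} (hF : Continuous F.uncurry) (hF' : Continuous F'.uncurry)
    (hderiv : ∀ t x, HasDerivAt (F · x) (F' t x) t) (t₀ : ℝ) :
    HasDerivAt (fun t => ∫ x, F t x ∂μ) (∫ x, F' t₀ x ∂μ) t₀ := by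
  obtain ⟨C, hC⟩ :=
    (((isCompact_closedBall t₀ 1).prod isCompact_univ).image hF').isBounded.exists_norm_le
  exact (hasDerivAt_integral_of_dominated_loc_of_deriv_le (bound := fun _ => C)
    (closedBall_mem_nhds t₀ one_pos)
    (Eventually.of_forall fun t =>
      (hF.comp (Continuous.prodMk_right t)).aestronglyMeasurable_of_compactSpace)
    (hF.comp (Continuous.prodMk_right t₀)).integrable_of_compactSpace
    (hF'.comp (Continuous.prodMk_right t₀)).aestronglyMeasurable_of_compactSpace
    (ae_of_all _ fun x t ht => hC _ ⟨(t, x), ⟨ht, mem_univ x⟩, rfl⟩)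
    (integrable_const C) (ae_of_all _ fun x t _ => hderiv t x)).2

end CompactDomain

section Laplace

variable {X : Type*} [MeasurableSpace X] (μ : Measure X)
  {E : Type*} [NormedAddCommGroup E] [InnerProductSpace ℝ E] (w : X → ℝ) (p : X → E)

noncomputable def laplaceTransform (ξ : E) : ℝ :=
  ∫ x, w x * exp (-⟪ξ, p x⟫) ∂μ

noncomputable def laplaceMoment (ξ : E) : E :=
  ∫ x, (w x * exp (-⟪ξ, p x⟫)) • p x ∂μ

variable [TopologicalSpace X] [CompactSpace X] [OpensMeasurableSpace X] [IsFiniteMeasure μ]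
  {w p}

theorem inner_laplaceMoment [CompleteSpace E] (hw : Continuous w) (hp : Continuous p)
    (ξ v : E) :
    ⟪v, laplaceMoment μ w p ξ⟫ = ∫ x, w x * exp (-⟪ξ, p x⟫) * ⟪v, p x⟫ ∂μ := by
  rw [laplaceMoment, ← integral_inner (by fun_prop : Continuous _).integrable_of_compactSpace]
  simp only [real_inner_smul_right]

theorem hasDerivAt_laplaceTransform_add_smul [CompleteSpace E] (hw : Continuous w)
    (hp : Continuous p) (ξ v : E) :
    HasDerivAt (fun t : ℝ => laplaceTransform μ w p (ξ + t • v))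
      (-⟪v, laplaceMoment μ w p ξ⟫) 0 := by
  have hderiv := hasDerivAt_integral_of_continuous (μ := μ)
    (F := fun t x => w x * exp (-(⟪ξ, p x⟫ + t * ⟪v, p x⟫)))
    (F' := fun t x => w x * exp (-(⟪ξ, p x⟫ + t * ⟪v, p x⟫)) * -⟪v, p x⟫)
    (by fun_prop) (by fun_prop) (fun t x => ?_) 0
  · simp only [zero_mul, add_zero, mul_neg, integral_neg] at hderiv
    simpa [laplaceTransform, inner_add_left, real_inner_smul_left,
      inner_laplaceMoment μ hw hp] using hderiv
  · exact ((((hasDerivAt_mul_const ⟪v, p x⟫).const_add ⟪ξ, p x⟫).fun_neg.exp).const_mul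
      (w x)).congr_deriv (by ring)

theorem laplaceMoment_eq_zero_of_isLocalMin [CompleteSpace E] (hw : Continuous w)
    (hp : Continuous p) {ξ : E} (hξ : IsLocalMin (laplaceTransform μ w p) ξ) :
    laplaceMoment μ w p ξ = 0 := by
  set v := laplaceMoment μ w p ξ
  have hline : IsLocalMin (laplaceTransform μ w p ∘ fun t : ℝ => ξ + t • v) 0 :=
    IsLocalMin.comp_continuous (by rwa [zero_smul, add_zero]) (by fun_prop)
  have hderiv := hline.hasDerivAt_eq_zero (hasDerivAt_laplaceTransform_add_smul μ hw hp ξ v)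
  rwa [neg_eq_zero, inner_self_eq_zero] at hderiv

theorem continuous_laplaceTransform [FiniteDimensional ℝ E] (hw : Continuous w)
    (hp : Continuous p) : Continuous (laplaceTransform μ w p) := by
  refine (continuous_parametric_integral_of_continuous (μ := μ)
    (f := fun ξ x => w x * exp (-⟪ξ, p x⟫)) (by fun_prop) isCompact_univ).congr fun ξ => ?_
  rw [Measure.restrict_univ, laplaceTransform]

theorem inner_sub_laplaceMoment_sub_pos [CompleteSpace E] (hw : Continuous w)
    (hp : Continuous p) (hw_pos : ∀ x, 0 < w x)
    (hhalf : ∀ u : E, u ≠ 0 → 0 < μ {x | ⟪u, p x⟫ < 0}) {ξ η : E} (hne : ξ ≠ η) :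
    0 < ⟪η - ξ, laplaceMoment μ w p ξ - laplaceMoment μ w p η⟫ := by
  have hint : ∀ ζ : E, Integrable (fun x => w x * exp (-⟪ζ, p x⟫) * ⟪η - ξ, p x⟫) μ :=
    fun ζ => (by fun_prop : Continuous _).integrable_of_compactSpace
  rw [inner_sub_right, inner_laplaceMoment μ hw hp, inner_laplaceMoment μ hw hp,
    ← integral_sub (hint ξ) (hint η)]
  have hdiff : ∀ x, w x * exp (-⟪ξ, p x⟫) * ⟪η - ξ, p x⟫ - w x * exp (-⟪η, p x⟫) * ⟪η - ξ, p x⟫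
      = w x * ((⟪η, p x⟫ - ⟪ξ, p x⟫) * (exp (-⟪ξ, p x⟫) - exp (-⟪η, p x⟫))) := fun x => by
    rw [inner_sub_left]; ring
  simp only [hdiff]
  refine Continuous.integral_pos_of_pos_on (by fun_prop)
    (fun x => mul_nonneg (hw_pos x).le (sub_mul_exp_neg_sub_exp_neg_nonneg _ _))
    (hhalf (η - ξ) (sub_ne_zero.mpr hne.symm)) fun x hx => ?_
  refine mul_pos (hw_pos x) (sub_mul_exp_neg_sub_exp_neg_pos fun h => ?_)
  exact (show ⟪η - ξ, p x⟫ < 0 from hx).ne (by rw [inner_sub_left, h, sub_self])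

theorem laplaceMoment_injective [CompleteSpace E] (hw : Continuous w) (hp : Continuous p)
    (hw_pos : ∀ x, 0 < w x) (hhalf : ∀ u : E, u ≠ 0 → 0 < μ {x | ⟪u, p x⟫ < 0}) :
    Function.Injective (laplaceMoment μ w p) := by
  intro ξ η h
  by_contra hne
  simpa [h] using inner_sub_laplaceMoment_sub_pos μ hw hp hw_pos hhalf hne

theorem exists_pos_mul_norm_le_laplaceTransform [FiniteDimensional ℝ E] (hw : Continuous w)
    (hp : Continuous p) (hw_pos : ∀ x, 0 < w x)
    (hhalf : ∀ u : E, u ≠ 0 → 0 < μ {x | ⟪u, p x⟫ < 0}) :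
    ∃ m > 0, ∀ ξ, m * ‖ξ‖ ≤ laplaceTransform μ w p ξ := by
  set N : E → ℝ := fun ξ => ∫ x, w x * max (-⟪ξ, p x⟫) 0 ∂μ
  have hN_cont : Continuous N := by
    refine (continuous_parametric_integral_of_continuous (μ := μ)
      (f := fun ξ x => w x * max (-⟪ξ, p x⟫) 0) (by fun_prop) isCompact_univ).congr fun ξ => ?_
    rw [Measure.restrict_univ]
  have hN_smul : ∀ c : ℝ, 0 ≤ c → ∀ ξ, N (c • ξ) = c * N ξ := fun c hc ξ => by
    simp only [N, ← integral_const_mul, real_inner_smul_left]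
    congr 1 with x
    rw [mul_left_comm, mul_max_of_nonneg _ _ hc, mul_zero, mul_neg]
  have hN_pos : ∀ u : E, u ≠ 0 → 0 < N u := fun u hu =>
    Continuous.integral_pos_of_pos_on (by fun_prop)
      (fun x => mul_nonneg (hw_pos x).le (le_max_right _ _)) (hhalf u hu)
      fun x hx => mul_pos (hw_pos x) (lt_max_of_lt_left (neg_pos.mpr hx))
  have hN_le : ∀ ξ, N ξ ≤ laplaceTransform μ w p ξ := fun ξ =>
    integral_mono (by fun_prop : Continuous _).integrable_of_compactSpace
      (by fun_prop : Continuous _).integrable_of_compactSpace fun x =>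
        mul_le_mul_of_nonneg_left
          (max_le ((le_add_of_nonneg_right zero_le_one).trans (add_one_le_exp _))
            (exp_pos _).le) (hw_pos x).le
  obtain ⟨m, hm, hmN⟩ := exists_pos_mul_norm_le_of_homogeneous hN_cont hN_smul hN_pos
  exact ⟨m, hm, fun ξ => (hmN ξ).trans (hN_le ξ)⟩

theorem exists_laplaceMoment_eq_zero [FiniteDimensional ℝ E] (hw : Continuous w)
    (hp : Continuous p) (hw_pos : ∀ x, 0 < w x)
    (hhalf : ∀ u : E, u ≠ 0 → 0 < μ {x | ⟪u, p x⟫ < 0}) :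
    ∃ ξ, laplaceMoment μ w p ξ = 0 := by
  obtain ⟨m, hm, hmL⟩ := exists_pos_mul_norm_le_laplaceTransform μ hw hp hw_pos hhalf
  have hcoercive : Tendsto (laplaceTransform μ w p) (cocompact E) atTop :=
    tendsto_atTop_mono hmL (tendsto_norm_cocompact_atTop.const_mul_atTop hm)
  obtain ⟨ξ, hξ⟩ := (continuous_laplaceTransform μ hw hp).exists_forall_le hcoercive
  exact ⟨ξ, laplaceMoment_eq_zero_of_isLocalMin μ hw hp (Eventually.of_forall hξ)⟩

theorem existsUnique_laplaceMoment_eq_zero [FiniteDimensional ℝ E] (hw : Continuous w)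
    (hp : Continuous p) (hw_pos : ∀ x, 0 < w x)
    (hhalf : ∀ u : E, u ≠ 0 → 0 < μ {x | ⟪u, p x⟫ < 0}) :
    ∃! ξ, laplaceMoment μ w p ξ = 0 :=
  let ⟨ξ, hξ⟩ := exists_laplaceMoment_eq_zero μ hw hp hw_pos hhalf
  ⟨ξ, hξ, fun _ hη => laplaceMoment_injective μ hw hp hw_pos hhalf (hη.trans hξ.symm)⟩

end Laplace

instance (n : ℕ) : IsFiniteMeasure (sphereMeasure n) := by
  unfold sphereMeasure; infer_instance

theorem stmt_13_general (n : ℕ)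
    (f : Metric.sphere (0 : EuclideanSpace ℝ (Fin (n + 1))) 1 → ℝ)
    (hf : Continuous f) (hfpos : ∀ x, 0 < f x) :
    ∃! ξ : EuclideanSpace ℝ (Fin (n + 1)),
      ∫ x : Metric.sphere (0 : EuclideanSpace ℝ (Fin (n + 1))) 1,
        (Real.exp (-(inner ℝ ξ (x : EuclideanSpace ℝ (Fin (n + 1)))) : ℝ) / f x) •
          (x : EuclideanSpace ℝ (Fin (n + 1))) ∂(sphereMeasure n) = 0 := by
  simp only [div_eq_inv_mul]
  exact existsUnique_laplaceMoment_eq_zero (sphereMeasure n)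
    (hf.inv₀ fun x => (hfpos x).ne') continuous_subtype_val (fun x => inv_pos.mpr (hfpos x))
    fun u hu => volume.toSphere_setOf_inner_neg_pos hu

/-- Corollary at the end of the paper; Chou–Wang. For every
continuous positive `f` on `Sⁿ` there is exactly one `ξ ∈ ℝ^{n+1}` with
`∫_{Sⁿ} x e^{−⟨ξ,x⟩} / f(x) dσ(x) = 0`: the translating speed of the limit of the
logarithmic Gauss curvature flow. -/
theorem stmt_13 (n : ℕ) (hn : 1 ≤ n)
    (f : Metric.sphere (0 : EuclideanSpace ℝ (Fin (n + 1))) 1 → ℝ)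
    (hf : Continuous f) (hfpos : ∀ x, 0 < f x) :
    ∃! ξ : EuclideanSpace ℝ (Fin (n + 1)),
      ∫ x : Metric.sphere (0 : EuclideanSpace ℝ (Fin (n + 1))) 1,
        (Real.exp (-(inner ℝ ξ (x : EuclideanSpace ℝ (Fin (n + 1)))) : ℝ) / f x) •
          (x : EuclideanSpace ℝ (Fin (n + 1))) ∂(sphereMeasure n) = 0 :=
  stmt_13_general n f hf hfpos
end
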